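/- For every positive integer m and every n ≥ 1, E‖n^{−1/2} Σ_{i=1}^n [ρ_m′(e_i) − ψ(e_i)] x_i‖ ≤ √n · (C/m) · (∫_ℝ |x| φ(x) dx) · (∫_ℝ |f′(u)| du) · E‖x_1‖. In particular n^{−1/2} Σ_{i=1}^n [ρ_m′(e_i) − ψ(e_i)] x_i = O_P(n^{1/2} m^{−1}). -/

import Mathlib

open MeasureTheory Filter ProbabilityTheory

/-- The regular (smoothing) sequence `ρ_m(u) = ∫ ρ(x) φ_m(x - u) dx` with
`φ_m(v) = m · φ(m · v)`. -/
noncomputable def regSeq (ρ φ : ℝ → ℝ) (m : ℕ) (u : ℝ) : ℝ :=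
  ∫ x : ℝ, ρ x * ((m : ℝ) * φ ((m : ℝ) * (x - u)))

noncomputable def smScore (ψ φ : ℝ → ℝ) (m : ℕ) (u : ℝ) : ℝ :=
  ∫ y : ℝ, ψ (u + y / m) * φ y


lemma psi_abs_le {ρ ψ : ℝ → ℝ} {C : ℝ}
    (hρlip : ∀ x y : ℝ, |ρ x - ρ y| ≤ C * |x - y|)
    (hψ : ∀ u v : ℝ, ρ u + ψ u * (v - u) ≤ ρ v) (u : ℝ) : |ψ u| ≤ C := by
  have h1 := hψ u (u + 1)
  have h2 := hψ u (u - 1)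
  have l1 : |ρ (u + 1) - ρ u| ≤ C := by simpa using hρlip (u + 1) u
  have l2 : |ρ (u - 1) - ρ u| ≤ C := by simpa using hρlip (u - 1) u
  rw [abs_le] at *
  constructor <;> nlinarith [l1.1, l1.2, l2.1, l2.2]

lemma psi_mono {ρ ψ : ℝ → ℝ}
    (hψ : ∀ u v : ℝ, ρ u + ψ u * (v - u) ≤ ρ v) : Monotone ψ := by
  intro u v huv
  rcases eq_or_lt_of_le huv with rfl | h
  · exact le_rfl
  · nlinarith [hψ u v, hψ v u, sub_pos.mpr h]

lemma phi_master {φ : ℝ → ℝ} (hφnonneg : ∀ v, 0 ≤ φ v)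
    (hφdecay : ∀ k n : ℕ, ∃ B : ℝ, ∀ x : ℝ, |x| ^ k * |iteratedDeriv n φ x| ≤ B) :
    ∃ K : ℝ, 0 ≤ K ∧ ∀ y : ℝ, (1 + y ^ 2) * φ y ≤ K ∧ (1 + y ^ 2) * (|y| * φ y) ≤ K := by
  obtain ⟨B0, h0⟩ := hφdecay 0 0
  obtain ⟨B1, h1⟩ := hφdecay 1 0
  obtain ⟨B2, h2⟩ := hφdecay 2 0
  obtain ⟨B3, h3⟩ := hφdecay 3 0
  simp only [iteratedDeriv_zero] at h0 h1 h2 h3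
  have habs : ∀ y : ℝ, |φ y| = φ y := fun y => abs_of_nonneg (hφnonneg y)
  have hB0 : 0 ≤ B0 := le_trans (by simp [habs 0, hφnonneg 0]) (h0 0)
  have hB1 : 0 ≤ B1 := le_trans (by simp [habs 1, hφnonneg 1]) (h1 1)
  have hB2 : 0 ≤ B2 := le_trans (by simp [habs 1, hφnonneg 1]) (h2 1)
  have hB3 : 0 ≤ B3 := le_trans (by simp [habs 1, hφnonneg 1]) (h3 1)
  refine ⟨B0 + B1 + B2 + B3, by linarith, fun y => ⟨?_, ?_⟩⟩
  · have a0 := h0 y; have a2 := h2 y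
    rw [habs y] at a0 a2
    nlinarith [sq_abs y, hφnonneg y, abs_nonneg y]
  · have a1 := h1 y; have a3 := h3 y
    rw [habs y] at a1 a3
    nlinarith [sq_abs y, hφnonneg y, abs_nonneg y]


lemma integrable_of_le_inv_one_add_sq {g : ℝ → ℝ} {K : ℝ}
    (hg : AEStronglyMeasurable g (volume : Measure ℝ))
    (h0 : ∀ y, 0 ≤ g y) (hK : ∀ y, (1 + y ^ 2) * g y ≤ K) : Integrable g := by
  refine (integrable_inv_one_add_sq.const_mul K).mono' hg ?_
  filter_upwards with y
  rw [Real.norm_eq_abs, abs_of_nonneg (h0 y)]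
  have hpos : (0:ℝ) < 1 + y ^ 2 := by positivity
  rw [mul_comm K, inv_mul_eq_div, le_div_iff₀ hpos]
  linarith [hK y]

lemma integral_kernel_eq (g φ : ℝ → ℝ) {m : ℕ} (hm : 0 < m) (u : ℝ) :
    ∫ z : ℝ, g z * ((m : ℝ) * φ ((m : ℝ) * (z - u))) = ∫ y : ℝ, g (u + y / m) * φ y := by
  have hm' : (m : ℝ) ≠ 0 := Nat.cast_ne_zero.mpr hm.ne'
  set h : ℝ → ℝ := fun y => g (u + y / m) * φ y with hh
  have key : ∀ z : ℝ, g z * ((m : ℝ) * φ ((m : ℝ) * (z - u)))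
      = (m : ℝ) * (fun w => h (w + (-(m : ℝ) * u))) ((m : ℝ) * z) := by
    intro z
    have h1 : (m : ℝ) * z + (-(m : ℝ) * u) = (m : ℝ) * (z - u) := by ring
    simp only [h1, hh]
    have h2 : u + (m : ℝ) * (z - u) / m = z := by field_simp; ring
    rw [h2]; ring
  calc ∫ z : ℝ, g z * ((m : ℝ) * φ ((m : ℝ) * (z - u)))
      = ∫ z : ℝ, (m : ℝ) * (fun w => h (w + (-(m : ℝ) * u))) ((m : ℝ) * z) := by
        exact integral_congr_ae (Filter.Eventually.of_forall key)
    _ = (m : ℝ) * ∫ z : ℝ, (fun w => h (w + (-(m : ℝ) * u))) ((m : ℝ) * z) :=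
        integral_const_mul _ _
    _ = (m : ℝ) * (|(m : ℝ)⁻¹| • ∫ w : ℝ, h (w + (-(m : ℝ) * u))) := by
        rw [MeasureTheory.Measure.integral_comp_mul_left (fun w => h (w + (-(m : ℝ) * u))) (m : ℝ)]
    _ = (m : ℝ) * (|(m : ℝ)⁻¹| • ∫ w : ℝ, h w) := by
        rw [integral_add_right_eq_self h (-(m : ℝ) * u)]
    _ = ∫ y : ℝ, h y := by
        rw [smul_eq_mul, abs_of_nonneg (by positivity : (0:ℝ) ≤ (m:ℝ)⁻¹)]
        field_simp

section A

variable {ρ ψ φ : ℝ → ℝ} {C : ℝ} {m : ℕ}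

lemma lip_nonneg (hρlip : ∀ x y : ℝ, |ρ x - ρ y| ≤ C * |x - y|) : 0 ≤ C := by
  have := (abs_nonneg (ρ 0 - ρ 1)).trans (hρlip 0 1)
  simpa using this

lemma rho_cont (hρlip : ∀ x y : ℝ, |ρ x - ρ y| ≤ C * |x - y|) : Continuous ρ := by
  have : LipschitzWith (Real.toNNReal C) ρ := by
    apply LipschitzWith.of_dist_le_mul
    intro x y
    rw [Real.dist_eq, Real.dist_eq]
    exact le_trans (hρlip x y)
      (mul_le_mul_of_nonneg_right (Real.le_coe_toNNReal C) (abs_nonneg _))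
  exact this.continuous

lemma integrable_phi (hφnonneg : ∀ v, 0 ≤ φ v) (hφcont : Continuous φ)
    (hφdecay : ∀ k n : ℕ, ∃ B : ℝ, ∀ x : ℝ, |x| ^ k * |iteratedDeriv n φ x| ≤ B) :
    Integrable φ := by
  obtain ⟨K, -, hK⟩ := phi_master hφnonneg hφdecay
  exact integrable_of_le_inv_one_add_sq hφcont.aestronglyMeasurable hφnonneg
    (fun y => (hK y).1)

lemma integrable_abs_mul_phi (hφnonneg : ∀ v, 0 ≤ φ v) (hφcont : Continuous φ)
    (hφdecay : ∀ k n : ℕ, ∃ B : ℝ, ∀ x : ℝ, |x| ^ k * |iteratedDeriv n φ x| ≤ B) :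
    Integrable (fun y : ℝ => |y| * φ y) := by
  obtain ⟨K, -, hK⟩ := phi_master hφnonneg hφdecay
  exact integrable_of_le_inv_one_add_sq (continuous_abs.mul hφcont).aestronglyMeasurable
    (fun y => mul_nonneg (abs_nonneg y) (hφnonneg y)) (fun y => (hK y).2)

lemma integrable_rho_phi (hρlip : ∀ x y : ℝ, |ρ x - ρ y| ≤ C * |x - y|)
    (hφnonneg : ∀ v, 0 ≤ φ v) (hφcont : Continuous φ)
    (hφdecay : ∀ k n : ℕ, ∃ B : ℝ, ∀ x : ℝ, |x| ^ k * |iteratedDeriv n φ x| ≤ B)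
    (hm : 0 < m) (u : ℝ) :
    Integrable (fun y : ℝ => ρ (u + y / m) * φ y) := by
  have hC := lip_nonneg hρlip
  have h1 : Integrable (fun y : ℝ => |ρ u| * φ y + C * (|y| * φ y)) :=
    ((integrable_phi hφnonneg hφcont hφdecay).const_mul _).add
      ((integrable_abs_mul_phi hφnonneg hφcont hφdecay).const_mul _)
  refine h1.mono' ?_ ?_
  · exact (((rho_cont hρlip).comp (by continuity : Continuous fun y : ℝ => u + y / m)).mul
      hφcont).aestronglyMeasurable
  · filter_upwards with y
    rw [Real.norm_eq_abs, abs_mul, abs_of_nonneg (hφnonneg y)]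
    have hb : |ρ (u + y / m)| ≤ |ρ u| + C * |y| := by
      have := hρlip (u + y / m) u
      have h2 : |u + y / m - u| = |y| / m := by
        rw [show u + y / m - u = y / m by ring, abs_div]
        simp [Nat.abs_cast]
      rw [h2] at this
      have h3 : C * (|y| / m) ≤ C * |y| := by
        apply mul_le_mul_of_nonneg_left _ hC
        rw [div_le_iff₀ (by exact_mod_cast hm : (0:ℝ) < m)]
        nlinarith [abs_nonneg y, (by exact_mod_cast hm : (1:ℝ) ≤ m)]
      calc |ρ (u + y / m)| ≤ |ρ u| + |ρ (u + y / m) - ρ u| := by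
            nlinarith [abs_sub_abs_le_abs_sub (ρ (u + y / m)) (ρ u)]
        _ ≤ |ρ u| + C * |y| := by linarith
    nlinarith [hφnonneg y, mul_le_mul_of_nonneg_right hb (hφnonneg y)]

lemma psi_meas (hψ : ∀ u v : ℝ, ρ u + ψ u * (v - u) ≤ ρ v) : Measurable ψ :=
  (psi_mono hψ).measurable

lemma integrable_psi_phi (hρlip : ∀ x y : ℝ, |ρ x - ρ y| ≤ C * |x - y|)
    (hψ : ∀ u v : ℝ, ρ u + ψ u * (v - u) ≤ ρ v)
    (hφnonneg : ∀ v, 0 ≤ φ v) (hφcont : Continuous φ)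
    (hφdecay : ∀ k n : ℕ, ∃ B : ℝ, ∀ x : ℝ, |x| ^ k * |iteratedDeriv n φ x| ≤ B)
    (u : ℝ) :
    Integrable (fun y : ℝ => ψ (u + y / m) * φ y) := by
  refine ((integrable_phi hφnonneg hφcont hφdecay).const_mul C).mono' ?_ ?_
  · exact (((psi_meas hψ).comp (by measurability : Measurable fun y : ℝ => u + y / m)).mul
      hφcont.measurable).aestronglyMeasurable
  · filter_upwards with y
    rw [Real.norm_eq_abs, abs_mul, abs_of_nonneg (hφnonneg y)]
    exact mul_le_mul_of_nonneg_right (psi_abs_le hρlip hψ _) (hφnonneg y)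

lemma regSeq_eq (hm : 0 < m) (u : ℝ) :
    regSeq ρ φ m u = ∫ y : ℝ, ρ (u + y / m) * φ y :=
  integral_kernel_eq ρ φ hm u

lemma smScore_abs_le (hρlip : ∀ x y : ℝ, |ρ x - ρ y| ≤ C * |x - y|)
    (hψ : ∀ u v : ℝ, ρ u + ψ u * (v - u) ≤ ρ v)
    (hφnonneg : ∀ v, 0 ≤ φ v) (hφcont : Continuous φ)
    (hφdecay : ∀ k n : ℕ, ∃ B : ℝ, ∀ x : ℝ, |x| ^ k * |iteratedDeriv n φ x| ≤ B)
    (hφone : ∫ v : ℝ, φ v = 1) (u : ℝ) :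
    |smScore ψ φ m u| ≤ C := by
  have h1 : |smScore ψ φ m u| ≤ ∫ y : ℝ, |ψ (u + y / m) * φ y| := by
    rw [smScore]
    simpa only [Real.norm_eq_abs] using
      norm_integral_le_integral_norm (μ := (volume : Measure ℝ)) (fun y : ℝ => ψ (u + y / m) * φ y)
  have h2 : (∫ y : ℝ, |ψ (u + y / m) * φ y|) ≤ ∫ y : ℝ, C * φ y := by
    refine integral_mono (integrable_psi_phi hρlip hψ hφnonneg hφcont hφdecay u).abs
      ((integrable_phi hφnonneg hφcont hφdecay).const_mul C) (fun y => ?_)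
    rw [abs_mul, abs_of_nonneg (hφnonneg y)]
    exact mul_le_mul_of_nonneg_right (psi_abs_le hρlip hψ _) (hφnonneg y)
  rw [integral_const_mul, hφone, mul_one] at h2
  exact h1.trans h2

lemma smScore_subgrad (hρlip : ∀ x y : ℝ, |ρ x - ρ y| ≤ C * |x - y|)
    (hψ : ∀ u v : ℝ, ρ u + ψ u * (v - u) ≤ ρ v)
    (hφnonneg : ∀ v, 0 ≤ φ v) (hφcont : Continuous φ)
    (hφdecay : ∀ k n : ℕ, ∃ B : ℝ, ∀ x : ℝ, |x| ^ k * |iteratedDeriv n φ x| ≤ B)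
    (hm : 0 < m) (u v : ℝ) :
    regSeq ρ φ m u + smScore ψ φ m u * (v - u) ≤ regSeq ρ φ m v := by
  rw [regSeq_eq hm, regSeq_eq hm, smScore]
  have h1 : regSeq ρ φ m u + (∫ y : ℝ, ψ (u + y / m) * φ y) * (v - u)
      = ∫ y : ℝ, (ρ (u + y / m) * φ y + (v - u) * (ψ (u + y / m) * φ y)) := by
    rw [integral_add (integrable_rho_phi hρlip hφnonneg hφcont hφdecay hm u)
      (((integrable_psi_phi hρlip hψ hφnonneg hφcont hφdecay u)).const_mul (v - u)),
      integral_const_mul, regSeq_eq hm]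
    ring
  rw [regSeq_eq hm] at h1
  rw [h1]
  refine integral_mono ?_ (integrable_rho_phi hρlip hφnonneg hφcont hφdecay hm v) (fun y => ?_)
  · exact (integrable_rho_phi hρlip hφnonneg hφcont hφdecay hm u).add
      (((integrable_psi_phi hρlip hψ hφnonneg hφcont hφdecay u)).const_mul (v - u))
  · have := hψ (u + y / m) (v + y / m)
    have h2 : v + y / m - (u + y / m) = v - u := by ring
    rw [h2] at this
    nlinarith [mul_le_mul_of_nonneg_right this (hφnonneg y)]



lemma phi_shift_bound {K : ℝ} (hφnonneg : ∀ v, 0 ≤ φ v)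
    (hK : ∀ y : ℝ, (1 + y ^ 2) * φ y ≤ K) (y s : ℝ) (hs : |s| ≤ 1) :
    (1 + y ^ 2) * φ (y - s) ≤ 4 * K := by
  have h1 := hK (y - s)
  have h2 : s ^ 2 ≤ 1 := by nlinarith [abs_le.mp hs]
  have h3 : 1 + y ^ 2 ≤ 4 * (1 + (y - s) ^ 2) := by nlinarith [sq_nonneg (3 * y - 4 * s)]
  nlinarith [hφnonneg (y - s), mul_le_mul_of_nonneg_right h3 (hφnonneg (y - s))]

lemma smScore_continuous (hρlip : ∀ x y : ℝ, |ρ x - ρ y| ≤ C * |x - y|)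
    (hψ : ∀ u v : ℝ, ρ u + ψ u * (v - u) ≤ ρ v)
    (hφnonneg : ∀ v, 0 ≤ φ v) (hφcont : Continuous φ)
    (hφdecay : ∀ k n : ℕ, ∃ B : ℝ, ∀ x : ℝ, |x| ^ k * |iteratedDeriv n φ x| ≤ B)
    (hm : 0 < m) :
    Continuous (smScore ψ φ m) := by
  obtain ⟨K, hK0, hK⟩ := phi_master hφnonneg hφdecay
  have hm' : (0:ℝ) < m := by exact_mod_cast hm
  have hmne : (m:ℝ) ≠ 0 := ne_of_gt hm'
  rw [continuous_iff_continuousAt]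
  intro u
  have heq : smScore ψ φ m = fun t => ∫ z : ℝ, ψ z * ((m:ℝ) * φ ((m:ℝ) * (z - t))) :=
    funext fun t => (integral_kernel_eq ψ φ hm t).symm
  rw [heq]
  refine continuousAt_of_dominated (F := fun t z => ψ z * ((m:ℝ) * φ ((m:ℝ) * (z - t))))
    (bound := fun z => C * ((m:ℝ) * (4 * K * (1 + ((m:ℝ) * (z - u)) ^ 2)⁻¹))) ?_ ?_ ?_ ?_
  · filter_upwards with t
    exact ((psi_meas hψ).mul
      ((hφcont.comp (by continuity : Continuous fun z : ℝ => (m:ℝ) * (z - t))).measurable.const_mul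
        _)).aestronglyMeasurable
  · filter_upwards [Metric.ball_mem_nhds u (by positivity : (0:ℝ) < 1 / m)] with t ht
    filter_upwards with z
    have hs : |(m:ℝ) * (t - u)| ≤ 1 := by
      rw [abs_mul, Nat.abs_cast]
      have h4 : |t - u| < 1 / m := by simpa [Real.dist_eq] using ht
      have h4' := mul_lt_mul_of_pos_left h4 hm'
      rw [mul_one_div, div_self hmne] at h4'
      linarith
    have harg : (m:ℝ) * (z - t) = (m:ℝ) * (z - u) - (m:ℝ) * (t - u) := by ring
    have hb : φ ((m:ℝ) * (z - t)) ≤ 4 * K * (1 + ((m:ℝ) * (z - u)) ^ 2)⁻¹ := by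
      have h5 := phi_shift_bound hφnonneg (fun y => (hK y).1) ((m:ℝ) * (z - u)) ((m:ℝ) * (t - u)) hs
      rw [← harg] at h5
      have hpos : (0:ℝ) < 1 + ((m:ℝ) * (z - u)) ^ 2 := by positivity
      rw [← div_eq_mul_inv, le_div_iff₀ hpos]
      nlinarith [h5]
    rw [Real.norm_eq_abs, abs_mul]
    have h6 : |(m:ℝ) * φ ((m:ℝ) * (z - t))| = (m:ℝ) * φ ((m:ℝ) * (z - t)) := by
      rw [abs_of_nonneg (mul_nonneg (le_of_lt hm') (hφnonneg _))]
    rw [h6]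
    have h7 : |ψ z| ≤ C := psi_abs_le hρlip hψ z
    have h8 : (m:ℝ) * φ ((m:ℝ) * (z - t)) ≤ (m:ℝ) * (4 * K * (1 + ((m:ℝ) * (z - u)) ^ 2)⁻¹) :=
      mul_le_mul_of_nonneg_left hb (le_of_lt hm')
    have h9 : (0:ℝ) ≤ (m:ℝ) * φ ((m:ℝ) * (z - t)) := mul_nonneg (le_of_lt hm') (hφnonneg _)
    calc |ψ z| * ((m:ℝ) * φ ((m:ℝ) * (z - t)))
        ≤ C * ((m:ℝ) * φ ((m:ℝ) * (z - t))) := mul_le_mul_of_nonneg_right h7 h9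
      _ ≤ C * ((m:ℝ) * (4 * K * (1 + ((m:ℝ) * (z - u)) ^ 2)⁻¹)) :=
          mul_le_mul_of_nonneg_left h8 (le_trans (abs_nonneg (ψ z)) h7)
  · have hint : Integrable (fun z : ℝ => (1 + ((m:ℝ) * (z - u)) ^ 2)⁻¹) :=
      (integrable_inv_one_add_sq.comp_mul_left' hmne).comp_sub_right u
    exact ((hint.const_mul (4 * K)).const_mul ((m:ℝ))).const_mul C
  · filter_upwards with z
    exact (continuous_const.mul (continuous_const.mul
      (hφcont.comp (by continuity : Continuous fun t : ℝ => (m:ℝ) * (z - t))))).continuousAt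


lemma regSeq_hasDerivAt (hρlip : ∀ x y : ℝ, |ρ x - ρ y| ≤ C * |x - y|)
    (hψ : ∀ u v : ℝ, ρ u + ψ u * (v - u) ≤ ρ v)
    (hφnonneg : ∀ v, 0 ≤ φ v) (hφcont : Continuous φ)
    (hφdecay : ∀ k n : ℕ, ∃ B : ℝ, ∀ x : ℝ, |x| ^ k * |iteratedDeriv n φ x| ≤ B)
    (hm : 0 < m) (u : ℝ) :
    HasDerivAt (regSeq ρ φ m) (smScore ψ φ m u) u := by
  rw [hasDerivAt_iff_tendsto_slope]
  set S := smScore ψ φ m with hS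
  set R := regSeq ρ φ m with hR
  have hScont : Continuous S := smScore_continuous hρlip hψ hφnonneg hφcont hφdecay hm
  have key : ∀ y : ℝ, y ≠ u → |slope R u y - S u| ≤ |S y - S u| := by
    intro y hy
    have hsub1 := smScore_subgrad hρlip hψ hφnonneg hφcont hφdecay hm u y
    have hsub2 := smScore_subgrad hρlip hψ hφnonneg hφcont hφdecay hm y u
    rw [slope_def_field]
    rw [← hS, ← hR] at hsub1 hsub2
    rcases lt_or_gt_of_ne hy with h | h
    · have hlt : y - u < 0 := by linarith
      have h1 : S y ≤ (R y - R u) / (y - u) := by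
        rw [le_div_iff_of_neg hlt]; nlinarith
      have h2 : (R y - R u) / (y - u) ≤ S u := by
        rw [div_le_iff_of_neg hlt]; nlinarith
      rw [abs_sub_comm (S y)]
      rw [abs_of_nonpos (by linarith)]
      have : S u - S y ≤ |S u - S y| := le_abs_self _
      linarith [abs_nonneg (S u - S y)]
    · have hgt : 0 < y - u := by linarith
      have h1 : S u ≤ (R y - R u) / (y - u) := by
        rw [le_div_iff₀ hgt]; nlinarith
      have h2 : (R y - R u) / (y - u) ≤ S y := by
        rw [div_le_iff₀ hgt]; nlinarith
      rw [abs_of_nonneg (by linarith)]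
      have : S y - S u ≤ |S y - S u| := le_abs_self _
      linarith
  have h1 : Tendsto (fun y => |S y - S u|) (nhdsWithin u {u}ᶜ) (nhds 0) := by
    have h0 : Tendsto (fun y => |S y - S u|) (nhds u) (nhds |S u - S u|) :=
      ((hScont.tendsto u).sub tendsto_const_nhds).abs
    simpa using h0.mono_left nhdsWithin_le_nhds
  have h2 : Tendsto (fun y => slope R u y - S u) (nhdsWithin u {u}ᶜ) (nhds 0) := by
    apply squeeze_zero_norm' ?_ h1
    filter_upwards [self_mem_nhdsWithin] with y hy
    simpa [Real.norm_eq_abs] using key y hy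
  have h3 := h2.add_const (S u)
  simpa using h3


lemma translation_L1 {f : ℝ → ℝ} (hfC1 : ContDiff ℝ 1 f) (hf'int : Integrable (deriv f))
    (hfint : Integrable f) (h : ℝ) :
    ∫ u : ℝ, |f (u - h) - f u| ≤ |h| * ∫ t : ℝ, |deriv f t| := by
  have hf'cont : Continuous (deriv f) := hfC1.continuous_deriv le_rfl
  have hfd : Differentiable ℝ f := hfC1.differentiable one_ne_zero
  have hpt : ∀ u : ℝ, |f (u - h) - f u| ≤ ∫ s in (0:ℝ)..1, |h| * |deriv f (u - s * h)| := by
    intro u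
    have hF : ∀ s ∈ Set.uIcc (0:ℝ) 1,
        HasDerivAt (fun s : ℝ => f (u - s * h)) (deriv f (u - s * h) * (-h)) s := by
      intro s _
      have h1 : HasDerivAt (fun s : ℝ => u - s * h) (-h) s := by
        simpa using ((hasDerivAt_id s).mul_const h).const_sub u
      exact ((hfd (u - s * h)).hasDerivAt).comp s h1
    have hint : IntervalIntegrable (fun s : ℝ => deriv f (u - s * h) * (-h)) volume 0 1 :=
      ((hf'cont.comp (by continuity : Continuous fun s : ℝ => u - s * h)).mul
        continuous_const).intervalIntegrable 0 1
    have hftc := intervalIntegral.integral_eq_sub_of_hasDerivAt hF hint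
    have heq : f (u - h) - f u = ∫ s in (0:ℝ)..1, deriv f (u - s * h) * (-h) := by
      rw [hftc]; norm_num
    rw [heq]
    calc |∫ s in (0:ℝ)..1, deriv f (u - s * h) * (-h)|
        ≤ ∫ s in (0:ℝ)..1, |deriv f (u - s * h) * (-h)| :=
          intervalIntegral.abs_integral_le_integral_abs zero_le_one
      _ = ∫ s in (0:ℝ)..1, |h| * |deriv f (u - s * h)| := by
          apply intervalIntegral.integral_congr
          intro s _
          simp only [abs_mul, abs_neg, mul_comm]
  set I := ∫ t : ℝ, |deriv f t| with hI
  have hI0 : 0 ≤ I := integral_nonneg fun t => abs_nonneg _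
  have hdiffint : Integrable (fun u : ℝ => |f (u - h) - f u|) :=
    ((hfint.comp_sub_right h).sub hfint).abs
  have hlin : ∫⁻ u : ℝ, ENNReal.ofReal (|f (u - h) - f u|)
      ≤ ENNReal.ofReal (|h| * I) := by
    have step1 : ∀ u : ℝ, ENNReal.ofReal (|f (u - h) - f u|)
        ≤ ∫⁻ s in Set.Ioc (0:ℝ) 1, ENNReal.ofReal (|h| * |deriv f (u - s * h)|) := by
      intro u
      have h1 := hpt u
      rw [intervalIntegral.integral_of_le zero_le_one] at h1
      have h2 : ENNReal.ofReal (∫ s in Set.Ioc (0:ℝ) 1, |h| * |deriv f (u - s * h)|)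
          = ∫⁻ s in Set.Ioc (0:ℝ) 1, ENNReal.ofReal (|h| * |deriv f (u - s * h)|) := by
        apply ofReal_integral_eq_lintegral_ofReal
        · exact (continuous_const.mul
            ((hf'cont.comp (by continuity : Continuous fun s : ℝ => u - s * h)).abs)).integrableOn_Ioc
        · filter_upwards with s using by positivity
      exact le_trans (ENNReal.ofReal_le_ofReal h1) (le_of_eq h2)
    calc ∫⁻ u : ℝ, ENNReal.ofReal (|f (u - h) - f u|)
        ≤ ∫⁻ u : ℝ, ∫⁻ s in Set.Ioc (0:ℝ) 1, ENNReal.ofReal (|h| * |deriv f (u - s * h)|) :=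
          lintegral_mono step1
      _ = ∫⁻ s in Set.Ioc (0:ℝ) 1, ∫⁻ u : ℝ, ENNReal.ofReal (|h| * |deriv f (u - s * h)|) := by
          apply lintegral_lintegral_swap
          apply Measurable.aemeasurable
          exact ENNReal.measurable_ofReal.comp
            (continuous_const.mul ((hf'cont.comp
              (by continuity : Continuous fun p : ℝ × ℝ => p.1 - p.2 * h)).abs)).measurable
      _ = ∫⁻ s in Set.Ioc (0:ℝ) 1, ENNReal.ofReal (|h| * I) := by
          apply setLIntegral_congr_fun measurableSet_Ioc
          intro s _
          have e1 : ∀ u : ℝ, ENNReal.ofReal (|h| * |deriv f (u - s * h)|)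
              = ENNReal.ofReal |h| * ENNReal.ofReal (|deriv f (u - s * h)|) := fun u =>
            ENNReal.ofReal_mul (abs_nonneg h)
          simp_rw [e1]
          rw [lintegral_const_mul' _ _ ENNReal.ofReal_ne_top]
          have e2 : ∫⁻ u : ℝ, ENNReal.ofReal (|deriv f (u - s * h)|)
              = ∫⁻ t : ℝ, ENNReal.ofReal (|deriv f t|) := by
            simpa [sub_eq_add_neg] using
              lintegral_add_right_eq_self (fun t : ℝ => ENNReal.ofReal (|deriv f t|)) (-(s * h))
          rw [e2, ← ofReal_integral_eq_lintegral_ofReal hf'int.abs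
            (Filter.Eventually.of_forall fun t => abs_nonneg _), ← ENNReal.ofReal_mul (abs_nonneg h)]
      _ = ENNReal.ofReal (|h| * I) := by
          rw [setLIntegral_const]
          simp [Real.volume_Ioc]
  have hJ : ∫ u : ℝ, |f (u - h) - f u|
      = (∫⁻ u : ℝ, ENNReal.ofReal (|f (u - h) - f u|)).toReal := by
    rw [← ofReal_integral_eq_lintegral_ofReal hdiffint
      (Filter.Eventually.of_forall fun u => abs_nonneg _),
      ENNReal.toReal_ofReal (integral_nonneg fun u => abs_nonneg _)]
  rw [hJ]
  exact ENNReal.toReal_le_of_le_ofReal (by positivity) hlin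



lemma shift_bound {ρ ψ f : ℝ → ℝ} {C : ℝ}
    (hρlip : ∀ x y : ℝ, |ρ x - ρ y| ≤ C * |x - y|)
    (hψ : ∀ u v : ℝ, ρ u + ψ u * (v - u) ≤ ρ v)
    (hfnonneg : ∀ u, 0 ≤ f u) (hfone : ∫ u : ℝ, f u = 1)
    (hfC1 : ContDiff ℝ 1 f) (hf'int : Integrable (deriv f)) (h : ℝ) :
    ∫ u : ℝ, |ψ (u + h) - ψ u| * f u ≤ C * |h| * ∫ t : ℝ, |deriv f t| := by
  have hfint : Integrable f := integrable_of_integral_eq_one hfone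
  have hfcont : Continuous f := hfC1.continuous
  have hψm : Measurable ψ := (psi_mono hψ).measurable
  have hmono := psi_mono hψ
  have hCb := fun u => psi_abs_le hρlip hψ u
  have hC : 0 ≤ C := le_trans (abs_nonneg _) (hCb 0)
  have int1 : Integrable (fun u : ℝ => ψ (u + h) * f u) := by
    refine (hfint.const_mul C).mono'
      (((hψm.comp (measurable_add_const h)).mul hfcont.measurable).aestronglyMeasurable) ?_
    filter_upwards with u
    rw [Real.norm_eq_abs, abs_mul, abs_of_nonneg (hfnonneg u)]
    exact mul_le_mul_of_nonneg_right (hCb _) (hfnonneg u)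
  have int2 : Integrable (fun u : ℝ => ψ u * f u) := by
    refine (hfint.const_mul C).mono' ((hψm.mul hfcont.measurable).aestronglyMeasurable) ?_
    filter_upwards with u
    rw [Real.norm_eq_abs, abs_mul, abs_of_nonneg (hfnonneg u)]
    exact mul_le_mul_of_nonneg_right (hCb _) (hfnonneg u)
  have int3 : Integrable (fun u : ℝ => ψ u * f (u - h)) := by
    refine ((hfint.comp_sub_right h).const_mul C).mono'
      ((hψm.mul (hfcont.measurable.comp (measurable_sub_const h))).aestronglyMeasurable) ?_
    filter_upwards with u
    rw [Real.norm_eq_abs, abs_mul, abs_of_nonneg (hfnonneg _)]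
    exact mul_le_mul_of_nonneg_right (hCb _) (hfnonneg _)
  have intd : Integrable (fun u : ℝ => (ψ (u + h) - ψ u) * f u) := by
    have := int1.sub int2
    simpa [Pi.sub_def, sub_mul] using this
  have hshift : ∫ u : ℝ, ψ (u + h) * f u = ∫ u : ℝ, ψ u * f (u - h) := by
    have := integral_add_right_eq_self (μ := (volume : Measure ℝ)) (fun w : ℝ => ψ w * f (w - h)) h
    simpa using this
  have habs : ∫ u : ℝ, |ψ (u + h) - ψ u| * f u = |∫ u : ℝ, (ψ (u + h) - ψ u) * f u| := by
    rcases le_or_gt 0 h with hh | hh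
    · have hpos : ∀ u : ℝ, 0 ≤ ψ (u + h) - ψ u := fun u =>
        sub_nonneg.mpr (hmono (by linarith : u ≤ u + h))
      rw [abs_of_nonneg (integral_nonneg fun u =>
        mul_nonneg (hpos u) (hfnonneg u))]
      congr 1
      funext u
      rw [abs_of_nonneg (hpos u)]
    · have hneg : ∀ u : ℝ, ψ (u + h) - ψ u ≤ 0 := fun u =>
        sub_nonpos.mpr (hmono (by linarith : u + h ≤ u))
      rw [abs_of_nonpos (integral_nonpos fun u =>
        mul_nonpos_of_nonpos_of_nonneg (hneg u) (hfnonneg u))]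
      rw [← integral_neg]
      congr 1
      funext u
      rw [abs_of_nonpos (hneg u)]
      ring
  rw [habs]
  have heq2 : ∫ u : ℝ, (ψ (u + h) - ψ u) * f u = ∫ u : ℝ, ψ u * (f (u - h) - f u) := by
    have e1 : ∫ u : ℝ, (ψ (u + h) - ψ u) * f u
        = (∫ u : ℝ, ψ (u + h) * f u) - ∫ u : ℝ, ψ u * f u := by
      rw [← integral_sub int1 int2]; congr 1; funext u; ring
    have e2 : ∫ u : ℝ, ψ u * (f (u - h) - f u)
        = (∫ u : ℝ, ψ u * f (u - h)) - ∫ u : ℝ, ψ u * f u := by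
      rw [← integral_sub int3 int2]; congr 1; funext u; ring
    rw [e1, e2, hshift]
  rw [heq2]
  have intd2 : Integrable (fun u : ℝ => |f (u - h) - f u|) :=
    ((hfint.comp_sub_right h).sub hfint).abs
  calc |∫ u : ℝ, ψ u * (f (u - h) - f u)|
      ≤ ∫ u : ℝ, |ψ u| * |f (u - h) - f u| := by
        simpa [Real.norm_eq_abs] using
          norm_integral_le_integral_norm (μ := (volume : Measure ℝ))
            (fun u : ℝ => ψ u * (f (u - h) - f u))
    _ ≤ ∫ u : ℝ, C * |f (u - h) - f u| := by
        refine integral_mono ?_ (intd2.const_mul C) (fun u => ?_)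
        · have h9 : Integrable (fun u : ℝ => ψ u * (f (u - h) - f u)) := by
            have := int3.sub int2
            simpa [Pi.sub_def, mul_sub] using this
          simpa [abs_mul] using h9.abs
        · exact mul_le_mul_of_nonneg_right (hCb u) (abs_nonneg _)
    _ = C * ∫ u : ℝ, |f (u - h) - f u| := integral_const_mul C _
    _ ≤ C * (|h| * ∫ t : ℝ, |deriv f t|) :=
        mul_le_mul_of_nonneg_left (translation_L1 hfC1 hf'int hfint h) hC
    _ = C * |h| * ∫ t : ℝ, |deriv f t| := by ring







lemma density_bound {ρ ψ φ f : ℝ → ℝ} {C : ℝ} {m : ℕ}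
    (hρlip : ∀ x y : ℝ, |ρ x - ρ y| ≤ C * |x - y|)
    (hψ : ∀ u v : ℝ, ρ u + ψ u * (v - u) ≤ ρ v)
    (hφnonneg : ∀ v, 0 ≤ φ v) (hφcont : Continuous φ)
    (hφdecay : ∀ k n : ℕ, ∃ B : ℝ, ∀ x : ℝ, |x| ^ k * |iteratedDeriv n φ x| ≤ B)
    (hφone : ∫ v : ℝ, φ v = 1)
    (hfnonneg : ∀ u, 0 ≤ f u) (hfone : ∫ u : ℝ, f u = 1)
    (hfC1 : ContDiff ℝ 1 f) (hf'int : Integrable (deriv f))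
    (hm : 0 < m) :
    ∫ u : ℝ, |smScore ψ φ m u - ψ u| * f u
      ≤ (C / m) * (∫ y : ℝ, |y| * φ y) * (∫ t : ℝ, |deriv f t|) := by
  have hfint : Integrable f := integrable_of_integral_eq_one hfone
  have hψm : Measurable ψ := (psi_mono hψ).measurable
  have hCb := fun u => psi_abs_le hρlip hψ u
  have hC : 0 ≤ C := le_trans (abs_nonneg _) (hCb 0)
  have hm' : (0:ℝ) < m := by exact_mod_cast hm
  set S := smScore ψ φ m with hS
  set I := ∫ t : ℝ, |deriv f t| with hI
  have hI0 : 0 ≤ I := integral_nonneg fun t => abs_nonneg _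
  set A := ∫ y : ℝ, |y| * φ y with hA
  have hA0 : 0 ≤ A := integral_nonneg fun y => mul_nonneg (abs_nonneg y) (hφnonneg y)
  have intDpsi : ∀ u : ℝ, Integrable (fun y : ℝ => (ψ (u + y / m) - ψ u) * φ y) := by
    intro u
    have h1 := (integrable_psi_phi (m := m) hρlip hψ hφnonneg hφcont hφdecay u).sub
      ((integrable_phi hφnonneg hφcont hφdecay).const_mul (ψ u))
    simpa [Pi.sub_def, sub_mul] using h1
  have hpt : ∀ u : ℝ, |S u - ψ u| ≤ ∫ y : ℝ, |ψ (u + y / m) - ψ u| * φ y := by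
    intro u
    have e2 : ψ u = ∫ y : ℝ, ψ u * φ y := by rw [integral_const_mul, hφone, mul_one]
    have e1 : S u - ψ u = ∫ y : ℝ, (ψ (u + y / m) - ψ u) * φ y := by
      calc S u - ψ u
          = (∫ y : ℝ, ψ (u + y / m) * φ y) - ∫ y : ℝ, ψ u * φ y := by
            rw [← e2]; rfl
        _ = ∫ y : ℝ, (ψ (u + y / m) * φ y - ψ u * φ y) :=
            (integral_sub (integrable_psi_phi (m := m) hρlip hψ hφnonneg hφcont hφdecay u)
              ((integrable_phi hφnonneg hφcont hφdecay).const_mul (ψ u))).symm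
        _ = ∫ y : ℝ, (ψ (u + y / m) - ψ u) * φ y := by
            congr 1; funext y; ring
    rw [e1]
    calc |∫ y : ℝ, (ψ (u + y / m) - ψ u) * φ y|
        ≤ ∫ y : ℝ, |ψ (u + y / m) - ψ u| * |φ y| := by
          simpa [Real.norm_eq_abs] using
            norm_integral_le_integral_norm (μ := (volume : Measure ℝ))
              (fun y : ℝ => (ψ (u + y / m) - ψ u) * φ y)
      _ = ∫ y : ℝ, |ψ (u + y / m) - ψ u| * φ y := by
          congr 1; funext y; rw [abs_of_nonneg (hφnonneg y)]
  have intShift : ∀ h : ℝ, Integrable (fun u : ℝ => |ψ (u + h) - ψ u| * f u) := by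
    intro h
    refine (hfint.const_mul (2 * C)).mono' ?_ ?_
    · exact ((((hψm.comp (measurable_add_const h)).sub hψm).abs).mul
        hfC1.continuous.measurable).aestronglyMeasurable
    · filter_upwards with u
      rw [Real.norm_eq_abs, abs_mul, abs_abs, abs_of_nonneg (hfnonneg u)]
      refine mul_le_mul_of_nonneg_right ?_ (hfnonneg u)
      calc |ψ (u + h) - ψ u| ≤ |ψ (u + h)| + |ψ u| := abs_sub _ _
        _ ≤ 2 * C := by linarith [hCb (u + h), hCb u]
  have intJ : Integrable (fun u : ℝ => |S u - ψ u| * f u) := by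
    refine (hfint.const_mul (2 * C)).mono' ?_ ?_
    · exact ((((smScore_continuous hρlip hψ hφnonneg hφcont hφdecay hm).measurable.sub
        hψm).abs).mul hfC1.continuous.measurable).aestronglyMeasurable
    · filter_upwards with u
      rw [Real.norm_eq_abs, abs_mul, abs_abs, abs_of_nonneg (hfnonneg u)]
      refine mul_le_mul_of_nonneg_right ?_ (hfnonneg u)
      calc |S u - ψ u| ≤ |S u| + |ψ u| := abs_sub _ _
        _ ≤ 2 * C := by
          linarith [smScore_abs_le (m := m) hρlip hψ hφnonneg hφcont hφdecay hφone u, hCb u]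
  have key : ∫⁻ u : ℝ, ENNReal.ofReal (|S u - ψ u| * f u)
      ≤ ENNReal.ofReal ((C / m) * A * I) := by
    have step1 : ∀ u : ℝ, ENNReal.ofReal (|S u - ψ u| * f u)
        ≤ ∫⁻ y : ℝ, ENNReal.ofReal (|ψ (u + y / m) - ψ u| * f u) * ENNReal.ofReal (φ y) := by
      intro u
      have h1 : |S u - ψ u| * f u ≤ (∫ y : ℝ, |ψ (u + y / m) - ψ u| * φ y) * f u :=
        mul_le_mul_of_nonneg_right (hpt u) (hfnonneg u)
      have h2 : (∫ y : ℝ, |ψ (u + y / m) - ψ u| * φ y) * f u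
          = ∫ y : ℝ, (|ψ (u + y / m) - ψ u| * f u) * φ y := by
        rw [← integral_mul_const]
        congr 1; funext y; ring
      have h5 : Integrable (fun y : ℝ => (|ψ (u + y / m) - ψ u| * f u) * φ y) := by
        refine ((intDpsi u).abs.const_mul (f u)).congr ?_
        filter_upwards with y
        rw [abs_mul, abs_of_nonneg (hφnonneg y)]
        ring
      have h3 : ENNReal.ofReal (∫ y : ℝ, (|ψ (u + y / m) - ψ u| * f u) * φ y)
          = ∫⁻ y : ℝ, ENNReal.ofReal ((|ψ (u + y / m) - ψ u| * f u) * φ y) := by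
        apply ofReal_integral_eq_lintegral_ofReal h5
        filter_upwards with y
        exact mul_nonneg (mul_nonneg (abs_nonneg _) (hfnonneg u)) (hφnonneg y)
      calc ENNReal.ofReal (|S u - ψ u| * f u)
          ≤ ENNReal.ofReal (∫ y : ℝ, (|ψ (u + y / m) - ψ u| * f u) * φ y) := by
            rw [← h2]; exact ENNReal.ofReal_le_ofReal h1
        _ = ∫⁻ y : ℝ, ENNReal.ofReal ((|ψ (u + y / m) - ψ u| * f u) * φ y) := h3
        _ = ∫⁻ y : ℝ, ENNReal.ofReal (|ψ (u + y / m) - ψ u| * f u) * ENNReal.ofReal (φ y) := by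
            congr 1; funext y
            exact ENNReal.ofReal_mul (mul_nonneg (abs_nonneg _) (hfnonneg u))
    have hmeas : AEMeasurable (fun p : ℝ × ℝ =>
        ENNReal.ofReal (|ψ (p.1 + p.2 / m) - ψ p.1| * f p.1) * ENNReal.ofReal (φ p.2))
        ((volume : Measure ℝ).prod (volume : Measure ℝ)) := by
      apply Measurable.aemeasurable
      refine Measurable.fun_mul ?_ ?_
      · exact ENNReal.measurable_ofReal.comp
          ((((hψm.comp (measurable_fst.add (measurable_snd.div_const _))).sub
            (hψm.comp measurable_fst)).abs).mul
            (hfC1.continuous.measurable.comp measurable_fst))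
      · exact ENNReal.measurable_ofReal.comp (hφcont.measurable.comp measurable_snd)
    calc ∫⁻ u : ℝ, ENNReal.ofReal (|S u - ψ u| * f u)
        ≤ ∫⁻ u : ℝ, ∫⁻ y : ℝ,
            ENNReal.ofReal (|ψ (u + y / m) - ψ u| * f u) * ENNReal.ofReal (φ y) :=
          lintegral_mono step1
      _ = ∫⁻ y : ℝ, ∫⁻ u : ℝ,
            ENNReal.ofReal (|ψ (u + y / m) - ψ u| * f u) * ENNReal.ofReal (φ y) :=
          lintegral_lintegral_swap hmeas
      _ ≤ ∫⁻ y : ℝ, ENNReal.ofReal (C * |y / m| * I) * ENNReal.ofReal (φ y) := by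
          apply lintegral_mono
          intro y
          dsimp only
          rw [lintegral_mul_const' _ _ ENNReal.ofReal_ne_top]
          refine mul_le_mul_left ?_ _
          rw [← ofReal_integral_eq_lintegral_ofReal (intShift (y / m))
            (Filter.Eventually.of_forall fun u =>
              mul_nonneg (abs_nonneg _) (hfnonneg u))]
          exact ENNReal.ofReal_le_ofReal
            (shift_bound hρlip hψ hfnonneg hfone hfC1 hf'int (y / m))
      _ = ∫⁻ y : ℝ, ENNReal.ofReal (C / m * I) * ENNReal.ofReal (|y| * φ y) := by
          congr 1; funext y
          rw [← ENNReal.ofReal_mul (by positivity), ← ENNReal.ofReal_mul (by positivity)]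
          congr 1
          rw [abs_div, Nat.abs_cast]
          field_simp
      _ = ENNReal.ofReal (C / m * I) * ∫⁻ y : ℝ, ENNReal.ofReal (|y| * φ y) :=
          lintegral_const_mul' _ _ ENNReal.ofReal_ne_top
      _ = ENNReal.ofReal (C / m * I) * ENNReal.ofReal A := by
          rw [← ofReal_integral_eq_lintegral_ofReal
            (integrable_abs_mul_phi hφnonneg hφcont hφdecay)
            (Filter.Eventually.of_forall fun y =>
              mul_nonneg (abs_nonneg y) (hφnonneg y)), hA]
      _ = ENNReal.ofReal ((C / m) * A * I) := by
          rw [← ENNReal.ofReal_mul (by positivity)]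
          congr 1
          ring
  have hJ : ∫ u : ℝ, |S u - ψ u| * f u
      = (∫⁻ u : ℝ, ENNReal.ofReal (|S u - ψ u| * f u)).toReal := by
    rw [← ofReal_integral_eq_lintegral_ofReal intJ
      (Filter.Eventually.of_forall fun u => mul_nonneg (abs_nonneg _) (hfnonneg u)),
      ENNReal.toReal_ofReal (integral_nonneg fun u =>
        mul_nonneg (abs_nonneg _) (hfnonneg u))]
  rw [hJ]
  exact ENNReal.toReal_le_of_le_ofReal (by positivity) key


theorem sum_smoothed_score_error_L1_bound
    (ρ ψ φ f : ℝ → ℝ) (C : ℝ) (hC : 0 < C)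
    (hρconv : ConvexOn ℝ Set.univ ρ)
    (hρlip : ∀ x y : ℝ, |ρ x - ρ y| ≤ C * |x - y|)
    (hψ : ∀ u v : ℝ, ρ u + ψ u * (v - u) ≤ ρ v)
    (hφnonneg : ∀ v, 0 ≤ φ v)
    (hφeven : ∀ v, φ (-v) = φ v)
    (hφsmooth : ContDiff ℝ (⊤ : ℕ∞) φ)
    (hφone : ∫ v : ℝ, φ v = 1)
    (hφdecay : ∀ k n : ℕ, ∃ B : ℝ, ∀ x : ℝ, |x| ^ k * |iteratedDeriv n φ x| ≤ B)
    (hfnonneg : ∀ u, 0 ≤ f u)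
    (hfone : ∫ u : ℝ, f u = 1)
    (hfC1 : ContDiff ℝ 1 f)
    (hf'int : Integrable (deriv f))
    (hρf : Tendsto (fun u : ℝ => ρ u * f u) (cocompact ℝ) (nhds 0))
    {Ω : Type*} [MeasurableSpace Ω] (P : Measure Ω) [IsProbabilityMeasure P]
    {d : ℕ}
    (e : ℕ → Ω → ℝ) (x : ℕ → Ω → EuclideanSpace ℝ (Fin d))
    (he : ∀ i, Measurable (e i)) (hx : ∀ i, Measurable (x i))
    -- the pairs (e_i, x_i) form an i.i.d. sequence
    (hiid : iIndepFun (fun i ω => (e i ω, x i ω)) P)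
    (hident : ∀ i, IdentDistrib (fun ω => (e i ω, x i ω)) (fun ω => (e 0 ω, x 0 ω)) P P)
    -- e_i is independent of x_i
    (hexi : ∀ i, IndepFun (e i) (x i) P)
    -- e_i has density f
    (hdens : P.map (e 0) = (volume : Measure ℝ).withDensity (fun u => ENNReal.ofReal (f u)))
    -- E‖x_1‖ < ∞
    (hxint : Integrable (fun ω => ‖x 0 ω‖) P)
    (m n : ℕ) (hm : 0 < m) (hn : 1 ≤ n) :
    ∫ ω, ‖((n : ℝ) ^ (-(1 : ℝ) / 2)) •
          ∑ i ∈ Finset.range n, (deriv (regSeq ρ φ m) (e i ω) - ψ (e i ω)) • x i ω‖ ∂P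
      ≤ Real.sqrt n * (C / (m : ℝ)) * (∫ y : ℝ, |y| * φ y) * (∫ u : ℝ, |deriv f u|) *
          ∫ ω, ‖x 0 ω‖ ∂P := by
  classical
  have hφcont : Continuous φ := hφsmooth.continuous
  have hψm : Measurable ψ := (psi_mono hψ).measurable
  have hScont : Continuous (smScore ψ φ m) :=
    smScore_continuous hρlip hψ hφnonneg hφcont hφdecay hm
  have hderiv : deriv (regSeq ρ φ m) = smScore ψ φ m := by
    funext u
    exact (regSeq_hasDerivAt hρlip hψ hφnonneg hφcont hφdecay hm u).deriv
  simp only [hderiv]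
  set g : ℝ → ℝ := fun u => smScore ψ φ m u - ψ u with hg
  have hgmeas : Measurable g := hScont.measurable.sub hψm
  have hgb : ∀ u, |g u| ≤ 2 * C := by
    intro u
    calc |g u| ≤ |smScore ψ φ m u| + |ψ u| := abs_sub _ _
      _ ≤ 2 * C := by
        linarith [smScore_abs_le (m := m) hρlip hψ hφnonneg hφcont hφdecay hφone u,
          psi_abs_le hρlip hψ u]
  -- basic nonnegative quantities
  set c : ℝ := (n : ℝ) ^ (-(1 : ℝ) / 2) with hc
  have hn0 : (0:ℝ) < n := by exact_mod_cast hn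
  have hc0 : 0 ≤ c := Real.rpow_nonneg (le_of_lt hn0) _
  set E : ℝ := ∫ ω, ‖x 0 ω‖ ∂P with hE
  have hE0 : 0 ≤ E := integral_nonneg fun ω => norm_nonneg _
  set A : ℝ := ∫ y : ℝ, |y| * φ y with hA
  have hA0 : 0 ≤ A := integral_nonneg fun y => mul_nonneg (abs_nonneg y) (hφnonneg y)
  set I : ℝ := ∫ t : ℝ, |deriv f t| with hI
  have hI0 : 0 ≤ I := integral_nonneg fun t => abs_nonneg _
  -- per-coordinate facts
  have hxiint : ∀ i, Integrable (fun ω => ‖x i ω‖) P := by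
    intro i
    have hid : IdentDistrib (fun ω => ‖x i ω‖) (fun ω => ‖x 0 ω‖) P P :=
      (hident i).comp (measurable_snd.norm)
    exact hid.integrable_iff.mpr hxint
  have hYint : ∀ i, Integrable (fun ω => |g (e i ω)|) P := by
    intro i
    refine (integrable_const (2 * C)).mono'
      ((hgmeas.abs.comp (he i)).aestronglyMeasurable) ?_
    filter_upwards with ω
    rw [Real.norm_eq_abs, abs_abs]
    exact hgb _
  have hsmul_int : ∀ i, Integrable (fun ω => g (e i ω) • x i ω) P := by
    intro i
    refine ((hxiint i).const_mul (2 * C)).mono'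
      (((hgmeas.comp (he i)).smul (hx i)).aestronglyMeasurable) ?_
    filter_upwards with ω
    rw [norm_smul, Real.norm_eq_abs]
    exact mul_le_mul_of_nonneg_right (hgb _) (norm_nonneg _)
  have hprod_int : ∀ i, Integrable (fun ω => |g (e i ω)| * ‖x i ω‖) P := by
    intro i
    refine ((hxiint i).const_mul (2 * C)).mono'
      (((hgmeas.abs.comp (he i)).mul (hx i).norm).aestronglyMeasurable) ?_
    filter_upwards with ω
    rw [Real.norm_eq_abs, abs_mul, abs_abs, abs_of_nonneg (norm_nonneg _)]
    exact mul_le_mul_of_nonneg_right (hgb _) (norm_nonneg _)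
  -- independence factorization
  have hfact : ∀ i, ∫ ω, |g (e i ω)| * ‖x i ω‖ ∂P
      = (∫ ω, |g (e i ω)| ∂P) * ∫ ω, ‖x i ω‖ ∂P := by
    intro i
    have hind : IndepFun (fun ω => |g (e i ω)|) (fun ω => ‖x i ω‖) P :=
      (hexi i).comp hgmeas.abs measurable_norm
    exact hind.integral_mul_eq_mul_integral ((hgmeas.abs.comp (he i)).aestronglyMeasurable)
      ((hx i).norm.aestronglyMeasurable)
  -- identical distribution
  have hYeq : ∀ i, ∫ ω, |g (e i ω)| ∂P = ∫ ω, |g (e 0 ω)| ∂P := by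
    intro i
    exact ((hident i).comp ((hgmeas.abs).comp measurable_fst)).integral_eq
  have hXeq : ∀ i, ∫ ω, ‖x i ω‖ ∂P = E := by
    intro i
    exact ((hident i).comp measurable_snd.norm).integral_eq
  -- expectation via the density
  set D : ℝ := ∫ u : ℝ, |g u| * f u with hD
  have hE0' : ∫ ω, |g (e 0 ω)| ∂P = D := by
    have h1 : ∫ ω, |g (e 0 ω)| ∂P = ∫ u : ℝ, |g u| ∂(P.map (e 0)) :=
      (integral_map (he 0).aemeasurable (hgmeas.abs.aestronglyMeasurable)).symm
    rw [h1, hdens]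
    have h2 : (fun u : ℝ => ENNReal.ofReal (f u))
        = fun u : ℝ => (((f u).toNNReal : NNReal) : ENNReal) := rfl
    have hfnnmeas : Measurable fun u : ℝ => (f u).toNNReal :=
      measurable_real_toNNReal.comp hfC1.continuous.measurable
    rw [h2, integral_withDensity_eq_integral_smul hfnnmeas (fun u => |g u|)]
    congr 1
    funext u
    rw [NNReal.smul_def, smul_eq_mul, Real.coe_toNNReal _ (hfnonneg u)]
    ring
  have hD0 : 0 ≤ D := by
    rw [← hE0']
    exact integral_nonneg fun ω => abs_nonneg _
  have hdb : D ≤ (C / m) * A * I :=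
    density_bound hρlip hψ hφnonneg hφcont hφdecay hφone hfnonneg hfone hfC1 hf'int hm
  -- the main chain
  have hsum_int : Integrable (fun ω => ∑ i ∈ Finset.range n, g (e i ω) • x i ω) P := by
    apply integrable_finset_sum
    intro i _
    exact hsmul_int i
  have step1 : ∫ ω, ‖c • ∑ i ∈ Finset.range n, g (e i ω) • x i ω‖ ∂P
      = c * ∫ ω, ‖∑ i ∈ Finset.range n, g (e i ω) • x i ω‖ ∂P := by
    rw [← integral_const_mul]
    congr 1
    funext ω
    rw [norm_smul, Real.norm_eq_abs, abs_of_nonneg hc0]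
  have step2 : ∫ ω, ‖∑ i ∈ Finset.range n, g (e i ω) • x i ω‖ ∂P
      ≤ ∑ i ∈ Finset.range n, ∫ ω, |g (e i ω)| * ‖x i ω‖ ∂P := by
    calc ∫ ω, ‖∑ i ∈ Finset.range n, g (e i ω) • x i ω‖ ∂P
        ≤ ∫ ω, ∑ i ∈ Finset.range n, ‖g (e i ω) • x i ω‖ ∂P := by
          refine integral_mono hsum_int.norm ?_ ?_
          · apply integrable_finset_sum
            intro i _
            exact (hsmul_int i).norm
          · intro ω
            exact norm_sum_le _ _
      _ = ∑ i ∈ Finset.range n, ∫ ω, ‖g (e i ω) • x i ω‖ ∂P :=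
          integral_finset_sum _ (fun i _ => (hsmul_int i).norm)
      _ = ∑ i ∈ Finset.range n, ∫ ω, |g (e i ω)| * ‖x i ω‖ ∂P := by
          apply Finset.sum_congr rfl
          intro i _
          congr 1
          funext ω
          rw [norm_smul, Real.norm_eq_abs]
  have step3 : ∑ i ∈ Finset.range n, ∫ ω, |g (e i ω)| * ‖x i ω‖ ∂P = n * (D * E) := by
    have : ∀ i ∈ Finset.range n, ∫ ω, |g (e i ω)| * ‖x i ω‖ ∂P = D * E := by
      intro i _
      rw [hfact i, hYeq i, hXeq i, hE0']
    rw [Finset.sum_congr rfl this, Finset.sum_const, Finset.card_range, nsmul_eq_mul]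
  have hcn : c * n = Real.sqrt n := by
    have h1 : c * (n:ℝ) = (n:ℝ) ^ (-(1:ℝ)/2) * (n:ℝ) ^ (1:ℝ) := by
      rw [Real.rpow_one]
    rw [h1, ← Real.rpow_add hn0, Real.sqrt_eq_rpow]
    norm_num
  calc ∫ ω, ‖c • ∑ i ∈ Finset.range n, g (e i ω) • x i ω‖ ∂P
      = c * ∫ ω, ‖∑ i ∈ Finset.range n, g (e i ω) • x i ω‖ ∂P := step1
    _ ≤ c * ((n : ℝ) * (D * E)) := by
        refine mul_le_mul_of_nonneg_left ?_ hc0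
        rw [← step3]
        exact step2
    _ = (c * n) * (D * E) := by ring
    _ ≤ (c * n) * (((C / m) * A * I) * E) := by
        refine mul_le_mul_of_nonneg_left
          (mul_le_mul_of_nonneg_right hdb hE0) ?_
        positivity
    _ = Real.sqrt n * (C / (m : ℝ)) * A * I * E := by
        rw [hcn]; ring
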